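/- (Proposition 1, uniqueness) Let N ≥ 2, 1/N = p_l < p_h < 1, integers 1 ≤ t < T, and suppose the linear program is feasible. Let f* be the threshold rule defined via k̄ = min{k′ : ((T−t)/T)·Σ_{k ≤ k′} [τ_d·μ(k;t) − τ_c·λ(k;t)] ≥ τ_d − τ_c}, with f*(k) = 1 for k < k̄, f*(k̄) = [ (T/(T−t))·(τ_d − τ_c) − Σ_{k=0}^{k̄−1} (τ_d·μ(k;t) − τ_c·λ(k;t)) ] / (τ_d·μ(k̄;t) − τ_c·λ(k̄;t)), and f*(k) = 0 for k > k̄. Then f* is the unique optimal solution: any feasible rule f with Σ_{k=0}^t λ(k;t) f(k) = Σ_{k=0}^t λ(k;t) f*(k) satisfies f(k) = f*(k) for all 0 ≤ k ≤ t. -/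

import Mathlib

/-! The success probability `(1 - p_l)^{N-1} (1 - p_h)` of `μ` is smaller than the success
probability `(1 - p_l)^N` of `λ`, so the likelihood ratio `μ(k;t) / λ(k;t)` is strictly
decreasing in `k`, and so is the ratio `c_k / λ(k;t)` of the constraint coefficients
`c_k = τ_d μ(k;t) − τ_c λ(k;t)` to the objective coefficients. The linear program is thus a
fractional knapsack problem whose items are best taken in the order `k = 0, 1, …`, and the
threshold rule `f*` takes them in that order until the constraint binds.

For uniqueness, let `f` be feasible with the objective value of `f*` and put `d = f − f*`.
Then `Σ λ_k d_k = 0` and `Σ c_k d_k ≥ 0`, so `Σ (c_k λ_{k̄} − c_{k̄} λ_k) d_k ≥ 0`. But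
`d_k ≤ 0` for `k < k̄`, where the weight is positive, and `d_k ≥ 0` for `k > k̄`, where it is
negative; so `d_k = 0` for `k ≠ k̄`, and then `Σ λ_k d_k = 0` gives `d_{k̄} = 0`. When `k̄ > t`,
`f* = 1` on `{0,…,t}`, so `d ≤ 0` there and `Σ λ_k d_k = 0` alone forces `d = 0`. -/

open Finset

/-- `lam N t pl k` is the probability of `k` idle signals out of `t` when all `N`
users transmit with probability `pl`. -/
noncomputable def lam (N t : ℕ) (pl : ℝ) (k : ℕ) : ℝ :=
  (t.choose k : ℝ) * ((1 - pl) ^ N) ^ k * (1 - (1 - pl) ^ N) ^ (t - k)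

/-- `mu N t pl ph k` is the probability of `k` idle signals out of `t` when exactly
one user transmits with probability `ph` and the others with `pl`. -/
noncomputable def mu (N t : ℕ) (pl ph : ℝ) (k : ℕ) : ℝ :=
  (t.choose k : ℝ) * ((1 - pl) ^ (N - 1) * (1 - ph)) ^ k *
    (1 - (1 - pl) ^ (N - 1) * (1 - ph)) ^ (t - k)

/-- The cooperation throughput `τ_c = pl (1 - pl)^{N-1}`. -/
noncomputable def tauC (N : ℕ) (pl : ℝ) : ℝ := pl * (1 - pl) ^ (N - 1)

/-- The defection throughput `τ_d = ph (1 - pl)^{N-1}`. -/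
noncomputable def tauD (N : ℕ) (pl ph : ℝ) : ℝ := ph * (1 - pl) ^ (N - 1)

/-- `f : {0,…,t} → [0,1]` is an intervention rule. -/
def IsRule (t : ℕ) (f : ℕ → ℝ) : Prop := ∀ k ≤ t, 0 ≤ f k ∧ f k ≤ 1

/-- The left-hand side of the incentive constraint:
`((T−t)/T) · Σ_{k=0}^t [τ_d μ(k;t) − τ_c λ(k;t)] f(k)`. -/
noncomputable def incLHS (N t T : ℕ) (pl ph : ℝ) (f : ℕ → ℝ) : ℝ :=
  (((T : ℝ) - t) / T) * ∑ k ∈ Finset.range (t + 1),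
    (tauD N pl ph * mu N t pl ph k - tauC N pl * lam N t pl k) * f k

/-- A feasible solution of the linear program: an intervention rule satisfying the
incentive constraint. -/
def Feasible (N t T : ℕ) (pl ph : ℝ) (f : ℕ → ℝ) : Prop :=
  IsRule t f ∧ incLHS N t T pl ph f ≥ tauD N pl ph - tauC N pl

/-- The objective of the linear program: the expected transmission probability of the
intervention device under cooperation, `Σ_{k=0}^t λ(k;t) f(k)`. -/
noncomputable def objective (N t : ℕ) (pl : ℝ) (f : ℕ → ℝ) : ℝ :=
  ∑ k ∈ Finset.range (t + 1), lam N t pl k * f k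

/-- The threshold intervention rule of Proposition 1: `f*(k) = 1` for `k < k̄`,
`f*(k) = 0` for `k > k̄`, and at `k = k̄` the value making the incentive constraint
bind. -/
noncomputable def thresholdRule (N t T : ℕ) (pl ph : ℝ) (kbar : ℕ) : ℕ → ℝ :=
  fun k =>
    if k < kbar then 1
    else if k = kbar then
      ((T : ℝ) / ((T : ℝ) - t) * (tauD N pl ph - tauC N pl) -
          ∑ j ∈ Finset.range kbar,
            (tauD N pl ph * mu N t pl ph j - tauC N pl * lam N t pl j)) /
        (tauD N pl ph * mu N t pl ph kbar - tauC N pl * lam N t pl kbar)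
    else 0

-- `lam N t pl = binomWeight t ((1 - pl) ^ N)` and
-- `mu N t pl ph = binomWeight t ((1 - pl) ^ (N - 1) * (1 - ph))` hold by `rfl`.
noncomputable def binomWeight (t : ℕ) (p : ℝ) (k : ℕ) : ℝ :=
  (t.choose k : ℝ) * p ^ k * (1 - p) ^ (t - k)

lemma binomWeight_pos {t k : ℕ} {p : ℝ} (hp0 : 0 < p) (hp1 : p < 1) (hk : k ≤ t) :
    0 < binomWeight t p k := by
  have hchoose : (0 : ℝ) < t.choose k := by exact_mod_cast Nat.choose_pos hk
  exact mul_pos (mul_pos hchoose (pow_pos hp0 k)) (pow_pos (sub_pos.mpr hp1) _)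

lemma binomWeight_mul_lt_mul {t j k : ℕ} {a b : ℝ} (hb : 0 < b) (hba : b < a) (ha : a < 1)
    (hjk : j < k) (hkt : k ≤ t) :
    binomWeight t b k * binomWeight t a j < binomWeight t b j * binomWeight t a k := by
  obtain ⟨d, rfl⟩ := Nat.exists_eq_add_of_lt hjk
  obtain ⟨s, rfl⟩ := Nat.exists_eq_add_of_le hkt
  have hsj : j + d + 1 + s - j = (d + 1) + s := by omega
  have hsk : j + d + 1 + s - (j + d + 1) = s := by omega
  have hcross : b ^ (d + 1) * (1 - a) ^ (d + 1) < a ^ (d + 1) * (1 - b) ^ (d + 1) := by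
    rw [← mul_pow, ← mul_pow]
    exact pow_lt_pow_left₀ (by nlinarith) (by nlinarith) d.succ_ne_zero
  have hj : (0 : ℝ) < (j + d + 1 + s).choose j := by exact_mod_cast Nat.choose_pos (by omega)
  have hk : (0 : ℝ) < (j + d + 1 + s).choose (j + d + 1) := by
    exact_mod_cast Nat.choose_pos (by omega)
  set K : ℝ := ((j + d + 1 + s).choose j : ℝ) * (j + d + 1 + s).choose (j + d + 1) *
      (a ^ j * b ^ j) * ((1 - a) ^ s * (1 - b) ^ s) with hKdef
  have hK : 0 < K :=
    mul_pos (mul_pos (mul_pos hj hk) (mul_pos (pow_pos (hb.trans hba) j) (pow_pos hb j)))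
      (mul_pos (pow_pos (sub_pos.mpr ha) s) (pow_pos (sub_pos.mpr (hba.trans ha)) s))
  unfold binomWeight
  rw [hsj, hsk]
  calc _ = K * (b ^ (d + 1) * (1 - a) ^ (d + 1)) := by rw [hKdef]; ring
    _ < K * (a ^ (d + 1) * (1 - b) ^ (d + 1)) := mul_lt_mul_of_pos_left hcross hK
    _ = _ := by rw [hKdef]; ring

lemma eq_of_sum_mul_eq_of_le_one {t : ℕ} {w f g : ℕ → ℝ} (hw : ∀ k ≤ t, 0 < w k)
    (hf : ∀ k ≤ t, f k ≤ 1) (hg : ∀ k ≤ t, g k = 1)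
    (hfg : ∑ k ∈ range (t + 1), w k * f k = ∑ k ∈ range (t + 1), w k * g k) :
    ∀ k ≤ t, f k = g k := by
  have hterm : ∀ k ∈ range (t + 1), 0 ≤ w k * (g k - f k) := fun k hk => by
    have hk : k ≤ t := Nat.lt_succ_iff.mp (mem_range.mp hk)
    exact mul_nonneg (hw k hk).le (by linarith [hf k hk, hg k hk])
  have hsum : ∑ k ∈ range (t + 1), w k * (g k - f k) = 0 := by
    simp only [mul_sub, sum_sub_distrib, hfg, sub_self]
  intro k hk
  have := (sum_eq_zero_iff_of_nonneg hterm).1 hsum k (mem_range.mpr (Nat.lt_succ_of_le hk))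
  have := (mul_eq_zero.1 this).resolve_left (hw k hk).ne'
  linarith

lemma eq_of_sum_mul_eq_of_threshold {t kbar : ℕ} {w c f g : ℕ → ℝ} (hw : ∀ k ≤ t, 0 < w k)
    (hcw : ∀ j k, j < k → k ≤ t → c k * w j < c j * w k) (hkbar : kbar ≤ t) (hf : IsRule t f)
    (hg_lt : ∀ k < kbar, g k = 1) (hg_gt : ∀ k, kbar < k → g k = 0)
    (hc : ∑ k ∈ range (t + 1), c k * g k ≤ ∑ k ∈ range (t + 1), c k * f k)
    (hw_eq : ∑ k ∈ range (t + 1), w k * f k = ∑ k ∈ range (t + 1), w k * g k) :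
    ∀ k ≤ t, f k = g k := by
  set e : ℕ → ℝ := fun k => c k * w kbar - c kbar * w k with he
  have hterm : ∀ k ∈ range (t + 1), e k * (f k - g k) ≤ 0 := by
    intro k hk
    have hkt : k ≤ t := Nat.lt_succ_iff.mp (mem_range.mp hk)
    rcases lt_trichotomy k kbar with hlt | rfl | hgt
    · have := hcw k kbar hlt hkbar
      exact mul_nonpos_of_nonneg_of_nonpos (by linarith)
        (by linarith [(hf k hkt).2, hg_lt k hlt])
    · simp [he]
    · have := hcw kbar k hgt hkt
      exact mul_nonpos_of_nonpos_of_nonneg (by linarith)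
        (by linarith [(hf k hkt).1, hg_gt k hgt])
  have hsum : ∑ k ∈ range (t + 1), e k * (f k - g k) =
      w kbar * (∑ k ∈ range (t + 1), c k * f k - ∑ k ∈ range (t + 1), c k * g k) -
        c kbar * (∑ k ∈ range (t + 1), w k * f k - ∑ k ∈ range (t + 1), w k * g k) := by
    simp only [he, mul_sub, ← sum_sub_distrib, mul_sum]
    exact sum_congr rfl fun k _ => by ring
  have hzero : ∀ k ∈ range (t + 1), e k * (f k - g k) = 0 := by
    refine (sum_eq_zero_iff_of_nonpos hterm).1 (le_antisymm (sum_nonpos hterm) ?_)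
    rw [hsum, hw_eq, sub_self, mul_zero, sub_zero]
    exact mul_nonneg (hw kbar hkbar).le (sub_nonneg.mpr hc)
  have hoff : ∀ k ≤ t, k ≠ kbar → f k - g k = 0 := by
    intro k hkt hne
    refine (mul_eq_zero.1 (hzero k (mem_range.mpr (Nat.lt_succ_of_le hkt)))).resolve_left ?_
    rcases hne.lt_or_gt with hlt | hgt
    · linarith [hcw k kbar hlt hkbar]
    · linarith [hcw kbar k hgt hkt]
  have hat : f kbar - g kbar = 0 := by
    have hw_sub : ∑ k ∈ range (t + 1), w k * (f k - g k) = 0 := by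
      simp only [mul_sub, sum_sub_distrib, hw_eq, sub_self]
    rw [sum_eq_single_of_mem kbar (mem_range.mpr (Nat.lt_succ_of_le hkbar)) fun k hk hne => by
      rw [hoff k (Nat.lt_succ_iff.mp (mem_range.mp hk)) hne, mul_zero]] at hw_sub
    exact (mul_eq_zero.1 hw_sub).resolve_left (hw kbar hkbar).ne'
  intro k hk
  rcases eq_or_ne k kbar with rfl | hne
  · linarith
  · linarith [hoff k hk hne]

lemma pos_of_sum_range_ge_of_forall_lt {c : ℕ → ℝ} {B : ℝ} {n : ℕ} (hB : 0 < B)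
    (hge : B ≤ ∑ k ∈ range (n + 1), c k) (hlt : ∀ m < n, ∑ k ∈ range (m + 1), c k < B) :
    0 < c n := by
  cases n with
  | zero => simpa using hB.trans_le hge
  | succ m =>
    rw [sum_range_succ] at hge
    linarith [hlt m m.lt_succ_self]

noncomputable def incCoeff (N t : ℕ) (pl ph : ℝ) (k : ℕ) : ℝ :=
  tauD N pl ph * mu N t pl ph k - tauC N pl * lam N t pl k

lemma horizon_ratio_pos {t T : ℕ} (htT : t < T) : (0 : ℝ) < ((T : ℝ) - t) / T :=
  div_pos (sub_pos.mpr (Nat.cast_lt.mpr htT)) (Nat.cast_pos.mpr (by omega))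

section Channel

variable {N t : ℕ} {pl ph : ℝ}

lemma lam_pos (hN : N ≠ 0) (hpl0 : 0 < pl) (hpl1 : pl < 1) {k : ℕ} (hk : k ≤ t) :
    0 < lam N t pl k :=
  binomWeight_pos (pow_pos (sub_pos.mpr hpl1) N)
    (pow_lt_one₀ (sub_nonneg.mpr hpl1.le) (by linarith) hN) hk

lemma mu_mul_lam_lt_mul (hN : N ≠ 0) (hpl0 : 0 < pl) (hlh : pl < ph) (hph : ph < 1)
    {j k : ℕ} (hjk : j < k) (hkt : k ≤ t) :
    mu N t pl ph k * lam N t pl j < mu N t pl ph j * lam N t pl k := by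
  have hpl1 : pl < 1 := hlh.trans hph
  have hq : 0 < (1 - pl) ^ (N - 1) := pow_pos (sub_pos.mpr hpl1) _
  have hba : (1 - pl) ^ (N - 1) * (1 - ph) < (1 - pl) ^ N := by
    rw [← pow_sub_one_mul hN]
    exact mul_lt_mul_of_pos_left (by linarith) hq
  exact binomWeight_mul_lt_mul (mul_pos hq (sub_pos.mpr hph)) hba
    (pow_lt_one₀ (sub_nonneg.mpr hpl1.le) (by linarith) hN) hjk hkt

lemma tauC_lt_tauD (hlh : pl < ph) (hpl1 : pl < 1) : tauC N pl < tauD N pl ph :=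
  mul_lt_mul_of_pos_right hlh (pow_pos (sub_pos.mpr hpl1) _)

lemma incCoeff_mul_lam_lt_mul (hN : N ≠ 0) (hpl0 : 0 < pl) (hlh : pl < ph) (hph : ph < 1)
    {j k : ℕ} (hjk : j < k) (hkt : k ≤ t) :
    incCoeff N t pl ph k * lam N t pl j < incCoeff N t pl ph j * lam N t pl k := by
  have htauD : 0 < tauD N pl ph :=
    mul_pos (hpl0.trans hlh) (pow_pos (sub_pos.mpr (hlh.trans hph)) _)
  have := mul_lt_mul_of_pos_left (mu_mul_lam_lt_mul hN hpl0 hlh hph hjk hkt) htauD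
  unfold incCoeff
  linarith

lemma Feasible.div_mul_le_sum {T : ℕ} {f : ℕ → ℝ} (hf : Feasible N t T pl ph f) (htT : t < T) :
    (T : ℝ) / (T - t) * (tauD N pl ph - tauC N pl) ≤
      ∑ k ∈ range (t + 1), incCoeff N t pl ph k * f k := by
  rw [← inv_div]
  exact (inv_mul_le_iff₀ (horizon_ratio_pos htT)).mpr hf.2

variable {T kbar k : ℕ}

lemma thresholdRule_of_lt (h : k < kbar) : thresholdRule N t T pl ph kbar k = 1 := if_pos h

lemma thresholdRule_of_gt (h : kbar < k) : thresholdRule N t T pl ph kbar k = 0 := by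
  simp [thresholdRule, h.not_gt, h.ne']

lemma sum_incCoeff_mul_thresholdRule (hkbar : kbar ≤ t) (hc : incCoeff N t pl ph kbar ≠ 0) :
    ∑ k ∈ range (t + 1), incCoeff N t pl ph k * thresholdRule N t T pl ph kbar k =
      (T : ℝ) / (T - t) * (tauD N pl ph - tauC N pl) := by
  have htail : ∑ k ∈ Ico (kbar + 1) (t + 1),
      incCoeff N t pl ph k * thresholdRule N t T pl ph kbar k = 0 :=
    sum_eq_zero fun k hk => by rw [thresholdRule_of_gt (mem_Ico.mp hk).1, mul_zero]
  have hhead : ∑ k ∈ range kbar, incCoeff N t pl ph k * thresholdRule N t T pl ph kbar k =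
      ∑ k ∈ range kbar, incCoeff N t pl ph k :=
    sum_congr rfl fun k hk => by rw [thresholdRule_of_lt (mem_range.mp hk), mul_one]
  rw [← sum_range_add_sum_Ico _ (Nat.succ_le_succ hkbar), htail, add_zero, sum_range_succ, hhead]
  have hval : thresholdRule N t T pl ph kbar kbar =
      ((T : ℝ) / (T - t) * (tauD N pl ph - tauC N pl) -
        ∑ j ∈ range kbar, incCoeff N t pl ph j) / incCoeff N t pl ph kbar := by
    simp [thresholdRule, incCoeff]
  rw [hval, mul_div_cancel₀ _ hc]
  ring

end Channel

theorem threshold_rule_unique_optimum_general (N t T : ℕ) (pl ph : ℝ) (hN : 2 ≤ N)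
    (hpl : pl = 1 / N) (hlh : pl < ph) (hph : ph < 1) (htT : t < T)
    (kbar : ℕ)
    (hkbar : (((T : ℝ) - t) / T) * ∑ k ∈ Finset.range (kbar + 1),
        (tauD N pl ph * mu N t pl ph k - tauC N pl * lam N t pl k)
      ≥ tauD N pl ph - tauC N pl)
    (hkbarmin : ∀ k' < kbar, (((T : ℝ) - t) / T) * ∑ k ∈ Finset.range (k' + 1),
        (tauD N pl ph * mu N t pl ph k - tauC N pl * lam N t pl k)
      < tauD N pl ph - tauC N pl) :
    ∀ f : ℕ → ℝ, Feasible N t T pl ph f →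
      objective N t pl f = objective N t pl (thresholdRule N t T pl ph kbar) →
      ∀ k ≤ t, f k = thresholdRule N t T pl ph kbar k := by
  intro f hf hobj
  have hN0 : N ≠ 0 := by omega
  have hpl0 : 0 < pl := by rw [hpl]; exact one_div_pos.mpr (by exact_mod_cast hN0.bot_lt)
  have hlam : ∀ k ≤ t, 0 < lam N t pl k := fun k => lam_pos hN0 hpl0 (hlh.trans hph)
  rcases le_or_gt kbar t with hkt | htk
  · have hr := horizon_ratio_pos htT
    have hB : 0 < (((T : ℝ) - t) / T)⁻¹ * (tauD N pl ph - tauC N pl) :=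
      mul_pos (inv_pos.mpr hr) (sub_pos.mpr (tauC_lt_tauD hlh (hlh.trans hph)))
    have hck : 0 < incCoeff N t pl ph kbar :=
      pos_of_sum_range_ge_of_forall_lt hB ((inv_mul_le_iff₀ hr).mpr hkbar)
        fun m hm => (lt_inv_mul_iff₀ hr).mpr (hkbarmin m hm)
    refine eq_of_sum_mul_eq_of_threshold hlam
      (fun j k => incCoeff_mul_lam_lt_mul hN0 hpl0 hlh hph) hkt hf.1
      (fun k => thresholdRule_of_lt) (fun k => thresholdRule_of_gt) ?_ hobj
    rw [sum_incCoeff_mul_thresholdRule hkt hck.ne']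
    exact hf.div_mul_le_sum htT
  · exact eq_of_sum_mul_eq_of_le_one hlam (fun k hk => (hf.1 k hk).2)
      (fun k hk => thresholdRule_of_lt (hk.trans_lt htk)) hobj

/-- (Proposition 1, uniqueness) Suppose the linear program is feasible, and let `k̄`
be the smallest `k'` with `((T−t)/T)·Σ_{k ≤ k'} [τ_d μ(k;t) − τ_c λ(k;t)] ≥ τ_d − τ_c`.
Then the threshold rule `f*` associated with `k̄` is the unique optimal solution:
any feasible rule attaining the same objective value agrees with `f*` on `{0,…,t}`. -/
theorem threshold_rule_unique_optimum (N t T : ℕ) (pl ph : ℝ) (hN : 2 ≤ N)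
    (hpl : pl = 1 / N) (hlh : pl < ph) (hph : ph < 1) (ht : 1 ≤ t) (htT : t < T)
    (hfeasLP : ∃ f : ℕ → ℝ, Feasible N t T pl ph f)
    (kbar : ℕ)
    (hkbar : (((T : ℝ) - t) / T) * ∑ k ∈ Finset.range (kbar + 1),
        (tauD N pl ph * mu N t pl ph k - tauC N pl * lam N t pl k)
      ≥ tauD N pl ph - tauC N pl)
    (hkbarmin : ∀ k' < kbar, (((T : ℝ) - t) / T) * ∑ k ∈ Finset.range (k' + 1),
        (tauD N pl ph * mu N t pl ph k - tauC N pl * lam N t pl k)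
      < tauD N pl ph - tauC N pl) :
    ∀ f : ℕ → ℝ, Feasible N t T pl ph f →
      objective N t pl f = objective N t pl (thresholdRule N t T pl ph kbar) →
      ∀ k ≤ t, f k = thresholdRule N t T pl ph kbar k :=
  threshold_rule_unique_optimum_general N t T pl ph hN hpl hlh hph htT kbar hkbar hkbarmin
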